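/- Let e ≥ 2, let ν be a partition, let k ≥ 0, and let (s1, s2) ∈ ℤ² be a charge with s2 − s1 > |ν| + ek. Suppose that the charged bipartition |(ν, ∅), (s1, s2)⟩ has at most one good removable box (over all residues i ∈ ℤ/eℤ), and that any good removable box b of it satisfies ct(b) ≡ s2 (mod e). Then the charged bipartition |(ν ⊔ 1^{ek}, ∅), (s1, s2)⟩, obtained by appending a column of ek boxes of size 1 to ν, also has at most one good removable box, and any good removable box b′ of it satisfies ct(b′) ≡ s2 (mod e). -/

import Mathlib

namespace GUnBranching

/-- A partition, given by its (0-indexed) weakly decreasing, eventually zero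
sequence of parts: `part k` is the (k+1)-st part `λ_{k+1}`. -/
structure Partition where
  part : ℕ → ℕ
  antitone : ∀ i j : ℕ, i ≤ j → part j ≤ part i
  eventually_zero : ∃ N : ℕ, ∀ n : ℕ, N ≤ n → part n = 0

namespace Partition

/-- The set of boxes (row, column) (0-indexed) of the Young diagram of a partition. -/
def boxSet (p : Partition) : Set (ℕ × ℕ) := {b | b.2 < p.part b.1}

/-- The size `|λ|` of a partition: the number of boxes of its Young diagram. -/
noncomputable def size (p : Partition) : ℕ := p.boxSet.ncard

/-- The β-set `β(λ) = {λ_k - k + 1 : k ≥ 1}` (0-indexed: `{part k - k : k ∈ ℕ}`). -/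
def betaSet (p : Partition) : Set ℤ := {z | ∃ k : ℕ, z = (p.part k : ℤ) - k}

/-- The charged β-set `{λ_k + s - k + 1 : k ≥ 1}` of `(λ, s)`. -/
def chargedBetaSet (p : Partition) (s : ℤ) : Set ℤ :=
  {z | ∃ k : ℕ, z = (p.part k : ℤ) + s - k}

/-- The number of (nonzero) parts of a partition. -/
noncomputable def length (p : Partition) : ℕ := {k : ℕ | p.part k ≠ 0}.ncard

end Partition

/-- The empty partition `∅`. -/
def emptyPartition : Partition :=
  ⟨fun _ => 0, fun _ _ _ => le_rfl, ⟨0, fun _ _ => rfl⟩⟩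

/-- The partition `3^a 2^b 1^c` (a parts equal to 3, b parts equal to 2, c parts equal to 1). -/
def threeTwoOne (a b c : ℕ) : Partition where
  part k := if k < a then 3 else if k < a + b then 2 else if k < a + b + c then 1 else 0
  antitone i j h := by (try dsimp only); split_ifs <;> omega
  eventually_zero := ⟨a + b + c, fun n hn => by (try dsimp only); split_ifs <;> omega⟩

/-- The column partition `1^m`. -/
def column (m : ℕ) : Partition := threeTwoOne 0 0 m

/-- The staircase partition `Δ_t = (t, t-1, …, 2, 1)`. -/
def staircase (t : ℕ) : Partition where
  part k := t - k
  antitone i j h := Nat.sub_le_sub_left h t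
  eventually_zero := ⟨t, fun n hn => Nat.sub_eq_zero_of_le hn⟩

/-- The partition `Δ_t ⊔ 1^r` (staircase with a column of `r` extra parts equal to 1). -/
def staircaseColumn (t r : ℕ) : Partition where
  part k := if k < t then t - k else if k < t + r then 1 else 0
  antitone i j h := by (try dsimp only); split_ifs <;> omega
  eventually_zero := ⟨t + r, fun n hn => by (try dsimp only); split_ifs <;> omega⟩

/-- `p ⊔ 1^r` : append `r` extra parts equal to 1 to the partition `p`. -/
noncomputable def appendOnes (p : Partition) (r : ℕ) : Partition where
  part k := max (p.part k) (if k < p.length + r then 1 else 0)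
  antitone i j h := max_le_max (p.antitone i j h) (by split_ifs <;> omega)
  eventually_zero := by
    obtain ⟨N, hN⟩ := p.eventually_zero
    refine ⟨max N (p.length + r), fun n hn => ?_⟩
    have h1 : p.part n = 0 := hN n (le_trans (le_max_left _ _) hn)
    have h2 : ¬ n < p.length + r := by
      have := le_trans (le_max_right N (p.length + r)) hn
      omega
    simp [h1, h2]

/-- `mu` is obtained from `lam` by removing one rim `e`-hook: on β-sets, a bead `x`
with an empty spot at `x - e` is moved to `x - e`. -/
def RemoveHook (e : ℕ) (lam mu : Partition) : Prop :=
  ∃ x : ℤ, x ∈ lam.betaSet ∧ (x - e) ∉ lam.betaSet ∧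
    mu.betaSet = insert (x - e) (lam.betaSet \ {x})

/-- A partition is an `e`-core if no rim `e`-hook can be removed from it. -/
def IsECore (e : ℕ) (p : Partition) : Prop := ∀ mu : Partition, ¬ RemoveHook e p mu

/-- `core` is the `e`-core of `lam`: it is obtained from `lam` by repeatedly removing
rim `e`-hooks, and no further rim `e`-hook can be removed. -/
def HasECore (e : ℕ) (lam core : Partition) : Prop :=
  Relation.ReflTransGen (RemoveHook e) lam core ∧ IsECore e core

/-- `lam` and `mu` have the same `e`-core. -/
def SameECore (e : ℕ) (lam mu : Partition) : Prop :=
  ∃ core : Partition, HasECore e lam core ∧ HasECore e mu core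

/-- `(q1, q2)` is the 2-quotient of `lam`: the odd (resp. even) β-numbers of `lam`,
transformed by `v ↦ (v+1)/2` (resp. `v ↦ v/2`), form the β-set of `q1` (resp. `q2`)
for a suitable charge. -/
def IsTwoQuotient (lam q1 q2 : Partition) : Prop :=
  (∃ c : ℤ, q1.chargedBetaSet c = {z : ℤ | 2 * z - 1 ∈ lam.betaSet}) ∧
  (∃ c : ℤ, q2.chargedBetaSet c = {z : ℤ | 2 * z ∈ lam.betaSet})

/-- The charge `s_t`: `(-(t+1+e)/2, t/2)` for even `t`, `(-(t+1)/2, (t+e)/2)` for odd `t`. -/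
def tauCharge (e t : ℕ) : ℤ × ℤ :=
  if t % 2 = 0 then (-(((t : ℤ) + 1 + e) / 2), (t : ℤ) / 2)
  else (-(((t : ℤ) + 1) / 2), ((t : ℤ) + e) / 2)

/-- `bp` is the twisted 2-quotient `τ(lam)` of `lam`, a partition with 2-core `Δ_t`:
it is the 2-quotient for even `t` and the swapped 2-quotient for odd `t`; the
corresponding charge is `tauCharge e t`. -/
def IsTwistedQuotient (t : ℕ) (lam : Partition) (bp : Partition × Partition) : Prop :=
  HasECore 2 lam (staircase t) ∧
  (if t % 2 = 0 then IsTwoQuotient lam bp.1 bp.2 else IsTwoQuotient lam bp.2 bp.1)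

/-- The abacus of a charged bipartition: positions are (column, row) where row
`0 : Fin 2` is the bottom row (first component, charge `s.1`) and row `1 : Fin 2`
the top row (second component, charge `s.2`). -/
def abacus (bp : Partition × Partition) (s : ℤ × ℤ) : Set (ℤ × Fin 2) :=
  {b | b.1 ∈ (if b.2 = (0 : Fin 2) then bp.1.chargedBetaSet s.1 else bp.2.chargedBetaSet s.2)}

/-- `P` is an `e`-period of the abacus `A`: beads `(x, r 0), (x-1, r 1), …, (x-e+1, r (e-1))`
of `A` where `x` is the largest column containing a bead of `A`, `r i = 0` (bottom row)
whenever `(x - i, bottom)` is a bead of `A` (for `i < e-1`), and once in the bottom row the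
period stays in the bottom row. -/
def IsEPeriodOf (e : ℕ) (A P : Set (ℤ × Fin 2)) : Prop :=
  ∃ (x : ℤ) (r : ℕ → Fin 2),
    P = {b | ∃ i : ℕ, i < e ∧ b = ((x - i : ℤ), r i)} ∧
    (∀ i : ℕ, i < e → ((x - i : ℤ), r i) ∈ A) ∧
    (∀ b ∈ A, b.1 ≤ x) ∧
    (∀ i : ℕ, i + 1 < e → ((x - i : ℤ), (0 : Fin 2)) ∈ A → r i = 0) ∧
    (∀ i : ℕ, i + 1 < e → r i = 0 → r (i + 1) = 0)

/-- `P 0, P 1, P 2, …` is the sequence of `e`-periods of `A`: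
each `P k` is the `e`-period of `A` minus the previous periods. -/
def IsPeriodSeq (e : ℕ) (A : Set (ℤ × Fin 2)) (P : ℕ → Set (ℤ × Fin 2)) : Prop :=
  ∀ k : ℕ, IsEPeriodOf e (A \ ⋃ i ∈ Finset.range k, P i) (P k)

/-- The abacus `A` is totally `e`-periodic: the `k`-th `e`-period exists for every `k`. -/
def TotallyPeriodic (e : ℕ) (A : Set (ℤ × Fin 2)) : Prop :=
  ∃ P : ℕ → Set (ℤ × Fin 2), IsPeriodSeq e A P

/-- `P` is the `(k+1)`-st `e`-period of `A` (so `k = 0` gives the first `e`-period). -/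
def IsKthPeriod (e : ℕ) (A : Set (ℤ × Fin 2)) (k : ℕ) (P : Set (ℤ × Fin 2)) : Prop :=
  ∃ Q : ℕ → Set (ℤ × Fin 2),
    (∀ i : ℕ, i ≤ k → IsEPeriodOf e (A \ ⋃ j ∈ Finset.range i, Q j) (Q i)) ∧ Q k = P

/-- Shift a set of abacus positions one step to the right. -/
def shiftRight (P : Set (ℤ × Fin 2)) : Set (ℤ × Fin 2) := {b | (b.1 - 1, b.2) ∈ P}

/-- Edge of the `sl_∞`-crystal moving the `(k+1)`-st `e`-period one step to the right:
the shifted period must again be the `(k+1)`-st `e`-period of the resulting abacus. -/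
def SlInfEdgeAt (e : ℕ) (s : ℤ × ℤ) (k : ℕ) (lam mu : Partition × Partition) : Prop :=
  TotallyPeriodic e (abacus lam s) ∧ TotallyPeriodic e (abacus mu s) ∧
  ∃ P : Set (ℤ × Fin 2),
    IsKthPeriod e (abacus lam s) k P ∧
    abacus mu s = (abacus lam s \ P) ∪ shiftRight P ∧
    IsKthPeriod e (abacus mu s) k (shiftRight P)

/-- Edge of the `sl_∞`-crystal. -/
def SlInfEdge (e : ℕ) (s : ℤ × ℤ) (lam mu : Partition × Partition) : Prop :=
  ∃ k : ℕ, SlInfEdgeAt e s k lam mu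

/-- A source vertex of the `sl_∞`-crystal: a vertex (totally `e`-periodic abacus)
with no incoming edge. -/
def IsSlInfSource (e : ℕ) (s : ℤ × ℤ) (bp : Partition × Partition) : Prop :=
  TotallyPeriodic e (abacus bp s) ∧ ∀ lam : Partition × Partition, ¬ SlInfEdge e s lam bp

/-- A box of a bipartition: (component, row, column), all 0-indexed
(component `0 : Fin 2` is the first component `λ¹`). -/
abbrev Box := Fin 2 × ℕ × ℕ

/-- The component of a bipartition indexed by `j : Fin 2`. -/
def comp (bp : Partition × Partition) (j : Fin 2) : Partition :=
  if j = 0 then bp.1 else bp.2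

/-- `b` is a box of the bipartition `bp`. -/
def IsBoxOf (bp : Partition × Partition) (b : Box) : Prop :=
  b.2.2 < (comp bp b.1).part b.2.1

/-- The (charged) content `ct(b) = y - x + s_j` of a box `b = (j, x, y)`. -/
def content (s : ℤ × ℤ) (b : Box) : ℤ :=
  (b.2.2 : ℤ) - (b.2.1 : ℤ) + (if b.1 = 0 then s.1 else s.2)

/-- `b` is an addable box of the bipartition `bp`. -/
def IsAddable (bp : Partition × Partition) (b : Box) : Prop :=
  b.2.2 = (comp bp b.1).part b.2.1 ∧
  (b.2.1 = 0 ∨ (comp bp b.1).part b.2.1 < (comp bp b.1).part (b.2.1 - 1))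

/-- `b` is a removable box of the bipartition `bp`. -/
def IsRemovable (bp : Partition × Partition) (b : Box) : Prop :=
  b.2.2 + 1 = (comp bp b.1).part b.2.1 ∧
  (comp bp b.1).part (b.2.1 + 1) < (comp bp b.1).part b.2.1

/-- The total order on addable/removable boxes: `b ≤ b'` iff `b = b'`, or
`ct(b) < ct(b')`, or the contents are equal, `b` lies in the second component and
`b'` in the first. -/
def boxLE (s : ℤ × ℤ) (b b' : Box) : Prop :=
  b = b' ∨ content s b < content s b' ∨
    (content s b = content s b' ∧ b.1 = 1 ∧ b'.1 = 0)

/-- The set of addable or removable boxes of residue `i` (the letters of the `i`-word). -/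
def IWord (e : ℕ) (s : ℤ × ℤ) (bp : Partition × Partition) (i : ZMod e) : Set Box :=
  {b | (IsAddable bp b ∨ IsRemovable bp b) ∧ ((content s b : ZMod e) = i)}

/-- A removable box of residue `i` surviving the Kashiwara cancellation: reading the
`i`-word in increasing order and cancelling each removable box with a following addable
box (recursively cancelling adjacent removable-addable pairs), `b` is not cancelled.
Equivalently, every final segment of the `i`-word starting at `b` contains strictly
more removable than addable boxes. -/
def SurvivingRemovable (e : ℕ) (s : ℤ × ℤ) (bp : Partition × Partition)
    (i : ZMod e) (b : Box) : Prop :=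
  b ∈ IWord e s bp i ∧ IsRemovable bp b ∧
  ∀ c ∈ IWord e s bp i, boxLE s b c →
    {d : Box | d ∈ IWord e s bp i ∧ IsAddable bp d ∧ boxLE s b d ∧ boxLE s d c}.ncard <
    {d : Box | d ∈ IWord e s bp i ∧ IsRemovable bp d ∧ boxLE s b d ∧ boxLE s d c}.ncard

/-- The good removable `i`-box: the smallest removable `i`-box surviving the
Kashiwara cancellation. -/
def IsGoodRemovable (e : ℕ) (s : ℤ × ℤ) (bp : Partition × Partition)
    (i : ZMod e) (b : Box) : Prop :=
  SurvivingRemovable e s bp i b ∧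
  ∀ b' : Box, SurvivingRemovable e s bp i b' → boxLE s b b'

/-- An addable box of residue `i` surviving the Kashiwara cancellation. -/
def SurvivingAddable (e : ℕ) (s : ℤ × ℤ) (bp : Partition × Partition)
    (i : ZMod e) (b : Box) : Prop :=
  b ∈ IWord e s bp i ∧ IsAddable bp b ∧
  ∀ c ∈ IWord e s bp i, boxLE s c b →
    {d : Box | d ∈ IWord e s bp i ∧ IsRemovable bp d ∧ boxLE s c d ∧ boxLE s d b}.ncard <
    {d : Box | d ∈ IWord e s bp i ∧ IsAddable bp d ∧ boxLE s c d ∧ boxLE s d b}.ncard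

/-- The good addable `i`-box: the largest addable `i`-box surviving the
Kashiwara cancellation. -/
def IsGoodAddable (e : ℕ) (s : ℤ × ℤ) (bp : Partition × Partition)
    (i : ZMod e) (b : Box) : Prop :=
  SurvivingAddable e s bp i b ∧
  ∀ b' : Box, SurvivingAddable e s bp i b' → boxLE s b' b

/-- A source vertex of the `ŝl_e`-crystal: no good removable `i`-box for any residue `i`. -/
def IsSlESource (e : ℕ) (s : ℤ × ℤ) (bp : Partition × Partition) : Prop :=
  ∀ (i : ZMod e) (b : Box), ¬ IsGoodRemovable e s bp i b

/-- `bp'` is obtained from `bp` by adding the box `b`. -/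
def AddBox (bp : Partition × Partition) (b : Box) (bp' : Partition × Partition) : Prop :=
  if b.1 = 0 then
    bp'.2 = bp.2 ∧ bp'.1.part = Function.update bp.1.part b.2.1 (bp.1.part b.2.1 + 1)
  else
    bp'.1 = bp.1 ∧ bp'.2.part = Function.update bp.2.part b.2.1 (bp.2.part b.2.1 + 1)

/-- Dominance order: `Dominates mu la` means `la ⊴ mu`. -/
def Dominates (mu la : Partition) : Prop :=
  ∀ k : ℕ, ∑ i ∈ Finset.range k, la.part i ≤ ∑ i ∈ Finset.range k, mu.part i

/-!
Appending `ek` parts equal to `1` to `ν` moves the bottom of its first column `ek` rows down,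
changing contents there by `ek ≡ 0 (mod e)`; elsewhere the letters are unchanged. Above the lowest
box of the first column of `ν` the `i`-words of `ν` and of `ν ⊔ 1^{ek}` agree, so a surviving
removable `i`-box there survives for `ν` as well. The only other removable box of
`ν ⊔ 1^{ek}` is its lowest one: if `ν` ends with a part `1`, it plays the role of the lowest
box of `ν`, `ek` rows higher and of the same residue; otherwise it is cancelled by the addable
box `(ℓ(ν), 1)` of the same residue. Hence every good removable box of `ν ⊔ 1^{ek}` has the
residue of some good removable box of `ν`, namely `s₂`, and two good removable boxes of the
same residue coincide.
-/

namespace Partition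

theorem ext_part {p q : Partition} (h : p.part = q.part) : p = q := by
  cases p; cases q; simp_all

theorem part_ne_zero_iff (p : Partition) (x : ℕ) : p.part x ≠ 0 ↔ x < p.length := by
  have hlow : IsLowerSet {k : ℕ | p.part k ≠ 0} := fun a b hba ha => by
    have := p.antitone b a hba
    simp only [Set.mem_ofPred_eq] at ha ⊢
    omega
  obtain ⟨N, hN⟩ := p.eventually_zero
  rcases hlow.eq_univ_or_Iio with h | ⟨a, h⟩
  · exact ((h.symm ▸ Set.mem_univ N : N ∈ {k : ℕ | p.part k ≠ 0}) (hN N le_rfl)).elim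
  · rw [length, h, Set.ncard_Iio_nat, ← Set.mem_Iio, ← h, Set.mem_ofPred_eq]

end Partition

theorem content_zero (s : ℤ × ℤ) (x y : ℕ) : content s (0, x, y) = (y : ℤ) - x + s.1 := by
  simp [content]

theorem isAddable_zero_iff (μ μ' : Partition) (x y : ℕ) :
    IsAddable (μ, μ') (0, x, y) ↔ y = μ.part x ∧ (x = 0 ∨ μ.part x < μ.part (x - 1)) :=
  Iff.rfl

theorem isRemovable_zero_iff (μ μ' : Partition) (x y : ℕ) :
    IsRemovable (μ, μ') (0, x, y) ↔ y + 1 = μ.part x ∧ μ.part (x + 1) < μ.part x :=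
  Iff.rfl

theorem IsRemovable.fst_eq_zero {μ : Partition} {d : Box}
    (h : IsRemovable (μ, emptyPartition) d) : d.1 = 0 := by
  obtain ⟨j, x, y⟩ := d
  fin_cases j
  · rfl
  · simp [IsRemovable, comp, emptyPartition] at h

theorem IsAddable.not_isRemovable {bp : Partition × Partition} {b : Box}
    (ha : IsAddable bp b) : ¬ IsRemovable bp b := fun hr => by
  have := ha.1
  have := hr.1
  omega

def boxRank (s : ℤ × ℤ) (b : Box) : ℤ := 2 * content s b + if b.1 = 0 then 1 else 0

theorem boxLE_iff {s : ℤ × ℤ} {b b' : Box} :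
    boxLE s b b' ↔ b = b' ∨ boxRank s b < boxRank s b' := by
  unfold boxLE boxRank
  obtain ⟨j, x, y⟩ := b
  obtain ⟨j', x', y'⟩ := b'
  fin_cases j <;> fin_cases j' <;>
  simp only [Fin.zero_eta, Fin.mk_one, Fin.isValue, Prod.mk.injEq, ↓reduceIte, one_ne_zero,
    zero_ne_one, true_and, and_true, false_and, and_false, or_false, false_or, add_zero] <;>
  omega

theorem boxLE_refl (s : ℤ × ℤ) (b : Box) : boxLE s b b := Or.inl rfl

theorem boxLE_of_content_lt {s : ℤ × ℤ} {b b' : Box} (h : content s b < content s b') :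
    boxLE s b b' := Or.inr (Or.inl h)

theorem boxLE.antisymm {s : ℤ × ℤ} {b b' : Box} (h : boxLE s b b') (h' : boxLE s b' b) :
    b = b' := by
  rw [boxLE_iff] at h h'
  rcases h with h | h
  · exact h
  rcases h' with h' | h'
  · exact h'.symm
  · exact absurd (h.trans h') (lt_irrefl _)

theorem boxLE.content_le {s : ℤ × ℤ} {b b' : Box} (h : boxLE s b b') :
    content s b ≤ content s b' := by
  rcases h with rfl | h | ⟨h, -⟩ <;> omega

theorem boxLE.content_lt {s : ℤ × ℤ} {b b' : Box} (h : boxLE s b b') (hb : b.1 = 0)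
    (hne : b ≠ b') : content s b < content s b' := by
  rcases h with rfl | h | ⟨-, h, -⟩
  · exact absurd rfl hne
  · exact h
  · simp [hb] at h

theorem finite_iWord (e : ℕ) (s : ℤ × ℤ) (bp : Partition × Partition) (i : ZMod e) :
    (IWord e s bp i).Finite := by
  obtain ⟨N₁, hN₁⟩ := bp.1.eventually_zero
  obtain ⟨N₂, hN₂⟩ := bp.2.eventually_zero
  have hN : ∀ j n, N₁ + N₂ ≤ n → (comp bp j).part n = 0 := by
    intro j n hn
    fin_cases j
    · exact hN₁ n (by omega)
    · exact hN₂ n (by omega)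
  refine (Set.finite_univ.prod ((Set.finite_Iic (N₁ + N₂)).prod
    (Set.finite_Iic ((comp bp 0).part 0 + (comp bp 1).part 0)))).subset ?_
  rintro ⟨j, x, y⟩ ⟨hletter, -⟩
  have hpart0 : (comp bp j).part 0 ≤ (comp bp 0).part 0 + (comp bp 1).part 0 := by
    fin_cases j <;> simp [comp]
  have hy := (comp bp j).antitone 0 x (Nat.zero_le x)
  simp only [Set.mem_prod, Set.mem_univ, Set.mem_Iic, true_and]
  unfold IsAddable IsRemovable at hletter
  dsimp only at hletter
  rcases hletter with ⟨hyx, hx | hx⟩ | ⟨hyx, hx⟩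
  · omega
  · have := hN j (x - 1)
    omega
  · have := hN j x
    omega

theorem IsRemovable.eq_of_content_eq {s : ℤ × ℤ} {bp : Partition × Partition} {b b' : Box}
    (hb : IsRemovable bp b) (hb' : IsRemovable bp b') (hj : b.1 = b'.1)
    (hc : content s b = content s b') : b = b' := by
  obtain ⟨j, x, y⟩ := b
  obtain ⟨j', x', y'⟩ := b'
  obtain rfl : j = j' := hj
  obtain ⟨hy, hx⟩ := hb
  obtain ⟨hy', hx'⟩ := hb'
  simp only [content, add_left_inj] at hc hy hx hy' hx'
  rcases lt_trichotomy x x' with h | rfl | h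
  · have := (comp bp j).antitone (x + 1) x' h
    omega
  · simp only [Prod.mk.injEq, true_and]
    omega
  · have := (comp bp j).antitone (x' + 1) x h
    omega

theorem content_eq_and_fst_eq_of_boxRank_eq {s : ℤ × ℤ} {b b' : Box}
    (h : boxRank s b = boxRank s b') : content s b = content s b' ∧ b.1 = b'.1 := by
  unfold boxRank at h
  obtain ⟨j, x, y⟩ := b
  obtain ⟨j', x', y'⟩ := b'
  fin_cases j <;> fin_cases j' <;>
  simp only [Fin.zero_eta, Fin.mk_one, Fin.isValue, ↓reduceIte, one_ne_zero, zero_ne_one,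
    and_true, and_false, add_zero] at h ⊢ <;>
  omega

theorem boxLE_of_boxRank_le {s : ℤ × ℤ} {bp : Partition × Partition} {b b' : Box}
    (hb : IsRemovable bp b) (hb' : IsRemovable bp b') (h : boxRank s b ≤ boxRank s b') :
    boxLE s b b' := by
  rcases h.lt_or_eq with h | h
  · exact boxLE_iff.2 (Or.inr h)
  · obtain ⟨hc, hj⟩ := content_eq_and_fst_eq_of_boxRank_eq h
    exact Or.inl (hb.eq_of_content_eq hb' hj hc)

theorem SurvivingRemovable.exists_isGoodRemovable {e : ℕ} {s : ℤ × ℤ}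
    {bp : Partition × Partition} {i : ZMod e} {b : Box} (hb : SurvivingRemovable e s bp i b) :
    ∃ g, IsGoodRemovable e s bp i g := by
  obtain ⟨g, hg, hmin⟩ := Set.exists_min_image {b' | SurvivingRemovable e s bp i b'}
    (boxRank s) ((finite_iWord e s bp i).subset fun _ h => h.1) ⟨b, hb⟩
  exact ⟨g, hg, fun b' hb' => boxLE_of_boxRank_le hg.2.1 hb'.2.1 (hmin b' hb')⟩

theorem IsGoodRemovable.unique {e : ℕ} {s : ℤ × ℤ} {bp : Partition × Partition} {i : ZMod e}
    {b b' : Box} (hb : IsGoodRemovable e s bp i b) (hb' : IsGoodRemovable e s bp i b') :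
    b = b' :=
  (hb.2 b' hb'.1).antisymm (hb'.2 b hb.1)

section Cancellation

variable {e : ℕ} {s : ℤ × ℤ} {i : ZMod e}

theorem finite_setOf_mem_iWord_and (bp : Partition × Partition) (P : Box → Prop) :
    {d | d ∈ IWord e s bp i ∧ P d}.Finite :=
  (finite_iWord e s bp i).subset fun _ h => h.1

theorem ncard_addable_lt_ncard_removable_self {bp : Partition × Partition} {b : Box}
    (hbW : b ∈ IWord e s bp i) (hb : IsRemovable bp b) :
    {d | d ∈ IWord e s bp i ∧ IsAddable bp d ∧ boxLE s b d ∧ boxLE s d b}.ncard <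
      {d | d ∈ IWord e s bp i ∧ IsRemovable bp d ∧ boxLE s b d ∧ boxLE s d b}.ncard := by
  have hA : {d | d ∈ IWord e s bp i ∧ IsAddable bp d ∧ boxLE s b d ∧ boxLE s d b} = ∅ :=
    Set.eq_empty_of_forall_notMem fun d ⟨_, hd, h₁, h₂⟩ =>
      hd.not_isRemovable (h₁.antisymm h₂ ▸ hb)
  rw [hA, Set.ncard_empty, Set.ncard_pos (finite_setOf_mem_iWord_and _ _)]
  exact ⟨b, hbW, hb, boxLE_refl s b, boxLE_refl s b⟩

theorem SurvivingRemovable.of_letters_above {bp bp' : Partition × Partition} {b b' : Box}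
    (h : SurvivingRemovable e s bp i b) (hb' : IsRemovable bp' b')
    (hres : (content s b' : ZMod e) = i)
    (hadd : ∀ d, IsAddable bp' d → boxLE s b' d → IsAddable bp d ∧ boxLE s b d)
    (hrem : ∀ d, (IsRemovable bp d ∧ boxLE s b d ∧ b ≠ d) ↔
      (IsRemovable bp' d ∧ boxLE s b' d ∧ b' ≠ d)) :
    SurvivingRemovable e s bp' i b' := by
  obtain ⟨-, -, hcount⟩ := h
  have hb'W : b' ∈ IWord e s bp' i := ⟨Or.inr hb', hres⟩
  refine ⟨hb'W, hb', fun c hc hb'c => ?_⟩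
  by_cases hb'c' : b' = c
  · exact hb'c' ▸ ncard_addable_lt_ncard_removable_self hb'W hb'
  have hcb : c ∈ IWord e s bp i ∧ boxLE s b c := by
    rcases hc.1 with hcA | hcR
    · obtain ⟨h₁, h₂⟩ := hadd c hcA hb'c
      exact ⟨⟨Or.inl h₁, hc.2⟩, h₂⟩
    · obtain ⟨h₁, h₂, -⟩ := (hrem c).2 ⟨hcR, hb'c, hb'c'⟩
      exact ⟨⟨Or.inr h₁, hc.2⟩, h₂⟩
  set X :=
    {d | d ∈ IWord e s bp' i ∧ IsRemovable bp' d ∧ boxLE s b' d ∧ b' ≠ d ∧ boxLE s d c}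
  have hXfin : X.Finite := finite_setOf_mem_iWord_and _ _
  calc _
    _ ≤ {d | d ∈ IWord e s bp i ∧ IsAddable bp d ∧ boxLE s b d ∧ boxLE s d c}.ncard := by
        refine Set.ncard_le_ncard (fun d ⟨hdW, hd, h₁, h₂⟩ => ?_)
          (finite_setOf_mem_iWord_and _ _)
        obtain ⟨hd', h₁'⟩ := hadd d hd h₁
        exact ⟨⟨Or.inl hd', hdW.2⟩, hd', h₁', h₂⟩
    _ < {d | d ∈ IWord e s bp i ∧ IsRemovable bp d ∧ boxLE s b d ∧ boxLE s d c}.ncard :=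
        hcount c hcb.1 hcb.2
    _ ≤ (insert b X).ncard := by
        refine Set.ncard_le_ncard (fun d ⟨hdW, hd, h₁, h₂⟩ => ?_) (hXfin.insert b)
        by_cases hbd : b = d
        · exact Or.inl hbd.symm
        · obtain ⟨hd', h₁', hne⟩ := (hrem d).1 ⟨hd, h₁, hbd⟩
          exact Or.inr ⟨⟨Or.inr hd', hdW.2⟩, hd', h₁', hne, h₂⟩
    _ ≤ X.ncard + 1 := Set.ncard_insert_le b X
    _ = (insert b' X).ncard := (Set.ncard_insert_of_notMem (fun h => h.2.2.2.1 rfl) hXfin).symm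
    _ ≤ _ := by
        refine Set.ncard_le_ncard ?_ (finite_setOf_mem_iWord_and _ _)
        rintro d (rfl | ⟨hdW, hd, h₁, -, h₂⟩)
        · exact ⟨hb'W, hb', boxLE_refl s d, hb'c⟩
        · exact ⟨hdW, hd, h₁, h₂⟩

theorem not_survivingRemovable_of_isAddable {bp : Partition × Partition} {a b : Box}
    (ha : IsAddable bp a) (hres : (content s a : ZMod e) = i) (hba : boxLE s b a)
    (hrem : ∀ d, IsRemovable bp d → boxLE s b d → boxLE s d a → d = b) :
    ¬ SurvivingRemovable e s bp i b := by
  intro ⟨_, _, hsurv⟩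
  have hcount := hsurv a ⟨Or.inl ha, hres⟩ hba
  have hR :
      {d | d ∈ IWord e s bp i ∧ IsRemovable bp d ∧ boxLE s b d ∧ boxLE s d a}.ncard ≤ 1 :=
    (Set.ncard_le_ncard (t := {b}) (fun d hd => hrem d hd.2.1 hd.2.2.1 hd.2.2.2)).trans
      (Set.ncard_singleton b).le
  have hA :
      0 < {d | d ∈ IWord e s bp i ∧ IsAddable bp d ∧ boxLE s b d ∧ boxLE s d a}.ncard :=
    (Set.ncard_pos (finite_setOf_mem_iWord_and _ _)).2
      ⟨a, ⟨Or.inl ha, hres⟩, ha, hba, boxLE_refl s a⟩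
  omega

end Cancellation

section AppendOnes

variable {ν : Partition} {m : ℕ} {s : ℤ × ℤ}

theorem appendOnes_part (ν : Partition) (m x : ℕ) :
    (appendOnes ν m).part x =
      if x < ν.length then ν.part x else if x < ν.length + m then 1 else 0 := by
  have := ν.part_ne_zero_iff x
  change max _ _ = _
  split_ifs <;> omega

theorem appendOnes_zero (ν : Partition) : appendOnes ν 0 = ν := by
  refine Partition.ext_part (funext fun x => ?_)
  have := ν.part_ne_zero_iff x
  rw [appendOnes_part]
  split_ifs <;> omega

theorem isAddable_appendOnes_iff {d : Box}
    (hd : d.1 = 0 → 1 - (ν.length : ℤ) + s.1 < content s d) :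
    IsAddable (appendOnes ν m, emptyPartition) d ↔ IsAddable (ν, emptyPartition) d := by
  obtain ⟨j, x, y⟩ := d
  fin_cases j
  · have hd := hd rfl
    simp only [Fin.zero_eta, content_zero] at hd ⊢
    rw [isAddable_zero_iff, isAddable_zero_iff, appendOnes_part, appendOnes_part]
    have := ν.part_ne_zero_iff x
    have := ν.part_ne_zero_iff (x - 1)
    have := ν.antitone (x - 1) x (Nat.sub_le x 1)
    split_ifs <;> omega
  · exact Iff.rfl

theorem isRemovable_appendOnes_iff {d : Box}
    (hd : d.1 = 0 → 1 - (ν.length : ℤ) + s.1 < content s d) :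
    IsRemovable (appendOnes ν m, emptyPartition) d ↔ IsRemovable (ν, emptyPartition) d := by
  obtain ⟨j, x, y⟩ := d
  fin_cases j
  · have hd := hd rfl
    simp only [Fin.zero_eta, content_zero] at hd ⊢
    rw [isRemovable_zero_iff, isRemovable_zero_iff, appendOnes_part, appendOnes_part]
    have := ν.part_ne_zero_iff x
    have := ν.part_ne_zero_iff (x + 1)
    have := ν.antitone x (x + 1) (Nat.le_succ x)
    split_ifs <;> omega
  · exact Iff.rfl

theorem eq_bottom_of_isRemovable_appendOnes {x y : ℕ}
    (h : IsRemovable (appendOnes ν m, emptyPartition) (0, x, y))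
    (hlow : content s (0, x, y) ≤ 1 - (ν.length : ℤ) + s.1) :
    x + 1 = ν.length + m ∧ y = 0 := by
  rw [isRemovable_zero_iff, appendOnes_part, appendOnes_part] at h
  rw [content_zero] at hlow
  have := ν.part_ne_zero_iff x
  have := ν.part_ne_zero_iff (x + 1)
  split_ifs at h <;> omega

theorem isAddable_appendOnes_corner (hm : 1 ≤ m)
    (h : ¬(1 ≤ ν.length ∧ ν.part (ν.length - 1) = 1)) :
    IsAddable (appendOnes ν m, emptyPartition) (0, ν.length, 1) := by
  rw [isAddable_zero_iff, appendOnes_part, appendOnes_part]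
  have := ν.part_ne_zero_iff (ν.length - 1)
  split_ifs <;> omega

end AppendOnes

theorem intCast_content_eq_of_eq_add {e m : ℕ} (hm : e ∣ m) {s : ℤ × ℤ} {b b' : Box}
    (h : content s b' = content s b + m) : (content s b' : ZMod e) = content s b := by
  rw [h, Int.cast_add, Int.cast_natCast, (ZMod.natCast_eq_zero_iff m e).2 hm, add_zero]

section AppendColumn

variable {e : ℕ} {i : ZMod e} {ν : Partition} {m : ℕ} {s : ℤ × ℤ}

theorem SurvivingRemovable.of_appendOnes_of_lt {x y : ℕ}
    (hb : SurvivingRemovable e s (appendOnes ν m, emptyPartition) i (0, x, y))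
    (hhigh : 1 - (ν.length : ℤ) + s.1 < content s (0, x, y)) :
    SurvivingRemovable e s (ν, emptyPartition) i (0, x, y) := by
  have habove :
      ∀ d, boxLE s (0, x, y) d → d.1 = 0 → 1 - (ν.length : ℤ) + s.1 < content s d :=
    fun _ hd _ => hhigh.trans_le hd.content_le
  refine hb.of_letters_above ((isRemovable_appendOnes_iff fun _ => hhigh).1 hb.2.1) hb.1.2
    (fun d hd hbd => ⟨(isAddable_appendOnes_iff (habove d hbd)).2 hd, hbd⟩) fun d => ?_
  exact ⟨fun ⟨hd, h⟩ => ⟨(isRemovable_appendOnes_iff (habove d h.1)).1 hd, h⟩,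
    fun ⟨hd, h⟩ => ⟨(isRemovable_appendOnes_iff (habove d h.1)).2 hd, h⟩⟩

theorem SurvivingRemovable.of_appendOnes_bottom {t x : ℕ} (hm : e ∣ m)
    (ht : t + 1 = ν.length) (hνt : ν.part t = 1) (hx : x + 1 = ν.length + m)
    (hb : SurvivingRemovable e s (appendOnes ν m, emptyPartition) i (0, x, 0)) :
    SurvivingRemovable e s (ν, emptyPartition) i (0, t, 0) := by
  have hct : content s (0, t, 0) = 1 - (ν.length : ℤ) + s.1 := by
    rw [content_zero]
    omega
  have hcx : content s (0, t, 0) = content s (0, x, 0) + m := by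
    rw [content_zero, content_zero]
    omega
  have hRt : IsRemovable (ν, emptyPartition) (0, t, 0) := by
    have := ν.part_ne_zero_iff (t + 1)
    rw [isRemovable_zero_iff]
    omega
  refine hb.of_letters_above hRt ((intCast_content_eq_of_eq_add hm hcx).trans hb.1.2)
    (fun d hd htd => ?_) fun d => ⟨?_, ?_⟩
  · have hlt := htd.content_lt rfl fun h => hd.not_isRemovable (h ▸ hRt)
    exact ⟨(isAddable_appendOnes_iff fun _ => hct ▸ hlt).2 hd, boxLE_of_content_lt (by omega)⟩
  · rintro ⟨hd, -, hne⟩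
    obtain ⟨j, u, v⟩ := d
    obtain rfl : j = 0 := hd.fst_eq_zero
    have hlt : 1 - (ν.length : ℤ) + s.1 < content s (0, u, v) := by
      by_contra hle
      obtain ⟨hu, rfl⟩ := eq_bottom_of_isRemovable_appendOnes hd (not_lt.1 hle)
      exact hne (by rw [show u = x by omega])
    refine ⟨(isRemovable_appendOnes_iff fun _ => hlt).1 hd, boxLE_of_content_lt (by omega),
      fun h => ?_⟩
    rw [← h] at hlt
    omega
  · rintro ⟨hd, htd, hne⟩
    have hlt := hct ▸ htd.content_lt rfl hne
    refine ⟨(isRemovable_appendOnes_iff fun _ => hlt).2 hd, boxLE_of_content_lt (by omega),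
      fun h => ?_⟩
    rw [← h] at hlt
    omega

theorem not_survivingRemovable_appendOnes_bottom {x : ℕ} (hm : e ∣ m) (hm₀ : 1 ≤ m)
    (hx : x + 1 = ν.length + m) (hcorner : ¬(1 ≤ ν.length ∧ ν.part (ν.length - 1) = 1)) :
    ¬ SurvivingRemovable e s (appendOnes ν m, emptyPartition) i (0, x, 0) := by
  intro hb
  have hca : content s (0, ν.length, 1) = content s (0, x, 0) + m := by
    rw [content_zero, content_zero]
    omega
  refine not_survivingRemovable_of_isAddable (isAddable_appendOnes_corner hm₀ hcorner)
    ((intCast_content_eq_of_eq_add hm hca).trans hb.1.2) (boxLE_of_content_lt (by omega))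
    (fun d hd _ hda => ?_) hb
  obtain ⟨j, u, v⟩ := d
  obtain rfl : j = 0 := hd.fst_eq_zero
  have hle := hda.content_le
  obtain ⟨hu, rfl⟩ := eq_bottom_of_isRemovable_appendOnes (s := s) hd (by
    simp only [content_zero] at hle ⊢
    push_cast at hle
    omega)
  rw [show u = x by omega]

theorem exists_survivingRemovable_of_appendOnes (hm : e ∣ m) {b : Box}
    (hb : SurvivingRemovable e s (appendOnes ν m, emptyPartition) i b) :
    ∃ b', SurvivingRemovable e s (ν, emptyPartition) i b' := by
  rcases Nat.eq_zero_or_pos m with rfl | hm₀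
  · rw [appendOnes_zero] at hb
    exact ⟨b, hb⟩
  obtain ⟨j, x, y⟩ := b
  obtain rfl : j = 0 := hb.2.1.fst_eq_zero
  by_cases hhigh : 1 - (ν.length : ℤ) + s.1 < content s (0, x, y)
  · exact ⟨_, hb.of_appendOnes_of_lt hhigh⟩
  obtain ⟨hx, rfl⟩ := eq_bottom_of_isRemovable_appendOnes hb.2.1 (not_lt.1 hhigh)
  by_cases hcorner : 1 ≤ ν.length ∧ ν.part (ν.length - 1) = 1
  · exact ⟨_, hb.of_appendOnes_bottom hm (by omega) hcorner.2 hx⟩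
  · exact absurd hb (not_survivingRemovable_appendOnes_bottom hm hm₀ hx hcorner)

end AppendColumn

theorem append_column_good_removable_general
    (e : ℕ) (nu : Partition) (k : ℕ) (s : ℤ × ℤ)
    (h2 : ∀ (i : ZMod e) (b : Box),
      IsGoodRemovable e s (nu, emptyPartition) i b →
      (content s b : ZMod e) = ((s.2 : ZMod e))) :
    (∀ (i i' : ZMod e) (b b' : Box),
      IsGoodRemovable e s (appendOnes nu (e * k), emptyPartition) i b →
      IsGoodRemovable e s (appendOnes nu (e * k), emptyPartition) i' b' → b = b') ∧
    (∀ (i : ZMod e) (b : Box),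
      IsGoodRemovable e s (appendOnes nu (e * k), emptyPartition) i b →
      (content s b : ZMod e) = ((s.2 : ZMod e))) := by
  have hres : ∀ (i : ZMod e) (b : Box),
      IsGoodRemovable e s (appendOnes nu (e * k), emptyPartition) i b →
      (content s b : ZMod e) = s.2 := by
    intro i b hb
    obtain ⟨b', hb'⟩ := exists_survivingRemovable_of_appendOnes (dvd_mul_right e k) hb.1
    obtain ⟨g, hg⟩ := hb'.exists_isGoodRemovable
    rw [hb.1.1.2, ← hg.1.1.2]
    exact h2 i g hg
  refine ⟨fun i i' b b' hb hb' => ?_, hres⟩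
  obtain rfl : i = i' := by rw [← hb.1.1.2, ← hb'.1.1.2, hres i b hb, hres i' b' hb']
  exact hb.unique hb'

/-- For an asymptotic charge (`s₂ - s₁ > |ν| + ek`), if `|(ν, ∅), s⟩`
has at most one good removable box, whose content is `≡ s₂ (mod e)` whenever it exists,
then the same holds for `|(ν ⊔ 1^{ek}, ∅), s⟩`. -/
theorem append_column_good_removable
    (e : ℕ) (he : 2 ≤ e) (nu : Partition) (k : ℕ) (s : ℤ × ℤ)
    (hs : (nu.size : ℤ) + (e : ℤ) * k < s.2 - s.1)
    (h1 : ∀ (i i' : ZMod e) (b b' : Box),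
      IsGoodRemovable e s (nu, emptyPartition) i b →
      IsGoodRemovable e s (nu, emptyPartition) i' b' → b = b')
    (h2 : ∀ (i : ZMod e) (b : Box),
      IsGoodRemovable e s (nu, emptyPartition) i b →
      (content s b : ZMod e) = ((s.2 : ZMod e))) :
    (∀ (i i' : ZMod e) (b b' : Box),
      IsGoodRemovable e s (appendOnes nu (e * k), emptyPartition) i b →
      IsGoodRemovable e s (appendOnes nu (e * k), emptyPartition) i' b' → b = b') ∧
    (∀ (i : ZMod e) (b : Box),
      IsGoodRemovable e s (appendOnes nu (e * k), emptyPartition) i b →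
      (content s b : ZMod e) = ((s.2 : ZMod e))) :=
  append_column_good_removable_general e nu k s h2

end GUnBranching
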